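/- arXiv:2405.12263 — 10 statements merged into one kernel-verified Lean document; each statement's English description precedes it below -/
import Mathlib

section
/- For every integer n ≥ 4, the edge irregularity strength of the cycle-star graph CS_{3,n−3} equals n − 1. -/
/-- The weight of an edge under a vertex labeling `φ`: the sum of the labels
of its two endpoints. -/
def edgeWeight {V : Type*} (φ : V → ℕ) : Sym2 V → ℕ :=
  Sym2.lift ⟨fun u v => φ u + φ v, fun u v => Nat.add_comm _ _⟩

/-- `φ` is an edge irregular `k`-labeling of `G`: it is a vertex labeling with
labels in `{1, …, k}` such that distinct edges get distinct weights. -/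
def IsEdgeIrregularLabeling {V : Type*} (G : SimpleGraph V) (k : ℕ) (φ : V → ℕ) : Prop :=
  (∀ v, φ v ∈ Finset.Icc 1 k) ∧ Set.InjOn (edgeWeight φ) G.edgeSet

/-- The edge irregularity strength of `G`: the least `k` for which `G` admits
an edge irregular `k`-labeling. -/
noncomputable def edgeIrregularityStrength {V : Type*} (G : SimpleGraph V) : ℕ :=
  sInf {k | ∃ φ : V → ℕ, IsEdgeIrregularLabeling G k φ}

/-- The cycle-star graph `CS_{k, n-k}` on `n` vertices: vertices `0, …, k-1`
form a cycle of length `k`, and the remaining `n - k` vertices are pendant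
leaves all attached to vertex `0` of the cycle. -/
def cycleStar (k n : ℕ) : SimpleGraph (Fin n) :=
  SimpleGraph.fromRel (fun i j =>
    (i.val < k ∧ j.val < k ∧ j.val = (i.val + 1) % k) ∨ (i.val = 0 ∧ k ≤ j.val))

/-- The label value as a function of the vertex index. -/
def labv (n x : ℕ) : ℕ :=
  if x = 0 then 1 else if x = 1 then n - 2 else if x = 2 then n - 1 else x - 2

lemma cycleStar3_adj (n : ℕ) (i j : Fin n) :
    (cycleStar 3 n).Adj i j ↔ i ≠ j ∧
      (i.val = 0 ∨ j.val = 0 ∨ (i.val = 1 ∧ j.val = 2) ∨ (i.val = 2 ∧ j.val = 1)) := by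
  simp only [cycleStar, SimpleGraph.fromRel_adj]
  constructor
  · rintro ⟨hne, h⟩
    exact ⟨hne, by omega⟩
  · rintro ⟨hne, h⟩
    have hv : i.val ≠ j.val := fun hv => hne (Fin.ext hv)
    exact ⟨hne, by omega⟩

set_option maxHeartbeats 1000000 in
lemma key (n A B C D : ℕ) (hn : 4 ≤ n) (hA : A < n) (hB : B < n) (hC : C < n) (hD : D < n)
    (h1 : A ≠ B) (h1' : A = 0 ∨ B = 0 ∨ (A = 1 ∧ B = 2) ∨ (A = 2 ∧ B = 1))
    (h2 : C ≠ D) (h2' : C = 0 ∨ D = 0 ∨ (C = 1 ∧ D = 2) ∨ (C = 2 ∧ D = 1))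
    (hw : labv n A + labv n B = labv n C + labv n D) :
    (A = C ∧ B = D) ∨ (A = D ∧ B = C) := by
  unfold labv at hw
  rcases h1' with rfl | rfl | ⟨rfl, rfl⟩ | ⟨rfl, rfl⟩ <;>
    rcases h2' with rfl | rfl | ⟨rfl, rfl⟩ | ⟨rfl, rfl⟩ <;>
    split_ifs at hw <;> first | omega | contradiction

theorem es_cycleStar_three (n : ℕ) (hn : 4 ≤ n) :
    edgeIrregularityStrength (cycleStar 3 n) = n - 1 := by
  have hmem : (n - 1) ∈ {k | ∃ φ : Fin n → ℕ,
      IsEdgeIrregularLabeling (cycleStar 3 n) k φ} := by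
    refine ⟨fun v => labv n v.val, ?_, ?_⟩
    · intro v
      have := v.2
      simp only [Finset.mem_Icc, labv]
      split_ifs <;> omega
    · intro e1 he1 e2 he2 hw
      induction e1 using Sym2.ind with
      | _ a b =>
        induction e2 using Sym2.ind with
        | _ c d =>
          rw [SimpleGraph.mem_edgeSet, cycleStar3_adj] at he1 he2
          obtain ⟨hab, h1⟩ := he1
          obtain ⟨hcd, h2⟩ := he2
          have hab' : a.val ≠ b.val := fun hv => hab (Fin.ext hv)
          have hcd' : c.val ≠ d.val := fun hv => hcd (Fin.ext hv)
          have hw' : labv n a.val + labv n b.val = labv n c.val + labv n d.val := hw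
          have := key n a.val b.val c.val d.val hn a.2 b.2 c.2 d.2 hab' h1 hcd' h2 hw'
          rw [Sym2.eq_iff]
          rcases this with ⟨h, h'⟩ | ⟨h, h'⟩
          · exact Or.inl ⟨Fin.ext h, Fin.ext h'⟩
          · exact Or.inr ⟨Fin.ext h, Fin.ext h'⟩
  apply le_antisymm
  · exact Nat.sInf_le hmem
  · refine le_csInf ⟨n - 1, hmem⟩ ?_
    rintro k ⟨φ, hb, hinj⟩
    set z : Fin n := ⟨0, by omega⟩ with hz
    have hinjphi : Set.InjOn φ (Finset.univ.erase z : Finset (Fin n)) := by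
      intro v hv w hw hvw
      simp only [Finset.coe_erase, Set.mem_diff, Finset.mem_coe, Finset.mem_univ,
        Set.mem_singleton_iff] at hv hw
      have hvz : v ≠ z := by simpa using hv
      have hwz : w ≠ z := by simpa using hw
      have hadj1 : (cycleStar 3 n).Adj z v := by
        rw [cycleStar3_adj]
        exact ⟨fun h => hvz h.symm, Or.inl rfl⟩
      have hadj2 : (cycleStar 3 n).Adj z w := by
        rw [cycleStar3_adj]
        exact ⟨fun h => hwz h.symm, Or.inl rfl⟩
      have heq : edgeWeight φ s(z, v) = edgeWeight φ s(z, w) := by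
        show φ z + φ v = φ z + φ w
        rw [hvw]
      have := hinj (((cycleStar 3 n).mem_edgeSet).mpr hadj1) (((cycleStar 3 n).mem_edgeSet).mpr hadj2) heq
      rw [Sym2.eq_iff] at this
      rcases this with ⟨-, h⟩ | ⟨h, h'⟩
      · exact h
      · exact h'.trans h
    have hcard := Finset.card_le_card_of_injOn φ
      (fun v _ => hb v) hinjphi
    have h1 : (Finset.univ.erase z).card = n - 1 := by
      rw [Finset.card_erase_of_mem (Finset.mem_univ z)]
      simp
    have h2 : (Finset.Icc 1 k).card = k := by simp
    omega
end

section
/- For every integer n ≥ 5, the edge irregularity strength of the cycle-star graph CS_{4,n−4} equals n − 2. -/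
def lab (n i : ℕ) : ℕ :=
  if i = 0 then 1 else if i = 1 then n - 3 else if i = 2 then n - 2
  else if i = 3 then n - 2 else i - 3

lemma lab0 (n : ℕ) : lab n 0 = 1 := rfl
lemma lab1 (n : ℕ) : lab n 1 = n - 3 := rfl
lemma lab2 (n : ℕ) : lab n 2 = n - 2 := rfl
lemma lab3 (n : ℕ) : lab n 3 = n - 2 := rfl
lemma lab_ge (n i : ℕ) (h : 4 ≤ i) : lab n i = i - 3 := by
  unfold lab; split_ifs <;> omega

def Q (n a b : ℕ) : Prop :=
  (a=0∧b=1)∨(a=1∧b=0)∨(a=1∧b=2)∨(a=2∧b=1)∨(a=2∧b=3)∨(a=3∧b=2)∨(a=0∧b=3)∨(a=3∧b=0)∨(a=0∧4≤b∧b<n)∨(b=0∧4≤a∧a<n)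

lemma weight_val (n a b : ℕ) (h : Q n a b) :
    (lab n a + lab n b = 1 + (n-3) ∧ ((a=0∧b=1)∨(a=1∧b=0))) ∨
    (lab n a + lab n b = (n-3) + (n-2) ∧ ((a=1∧b=2)∨(a=2∧b=1))) ∨
    (lab n a + lab n b = (n-2) + (n-2) ∧ ((a=2∧b=3)∨(a=3∧b=2))) ∨
    (lab n a + lab n b = 1 + (n-2) ∧ ((a=0∧b=3)∨(a=3∧b=0))) ∨
    (lab n a + lab n b = 1 + (a+b-3) ∧ ((a=0∧4≤b∧b<n)∨(b=0∧4≤a∧a<n))) := by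
  rcases h with ⟨rfl,rfl⟩|⟨rfl,rfl⟩|⟨rfl,rfl⟩|⟨rfl,rfl⟩|⟨rfl,rfl⟩|⟨rfl,rfl⟩|⟨rfl,rfl⟩|⟨rfl,rfl⟩|⟨rfl,hb,hbn⟩|⟨rfl,ha,han⟩
  · exact Or.inl ⟨by rw [lab0, lab1], Or.inl ⟨rfl, rfl⟩⟩
  · exact Or.inl ⟨by rw [lab0, lab1]; omega, Or.inr ⟨rfl, rfl⟩⟩
  · exact Or.inr (Or.inl ⟨by rw [lab1, lab2], Or.inl ⟨rfl, rfl⟩⟩)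
  · exact Or.inr (Or.inl ⟨by rw [lab1, lab2]; omega, Or.inr ⟨rfl, rfl⟩⟩)
  · exact Or.inr (Or.inr (Or.inl ⟨by rw [lab2, lab3], Or.inl ⟨rfl, rfl⟩⟩))
  · exact Or.inr (Or.inr (Or.inl ⟨by rw [lab2, lab3], Or.inr ⟨rfl, rfl⟩⟩))
  · exact Or.inr (Or.inr (Or.inr (Or.inl ⟨by rw [lab0, lab3], Or.inl ⟨rfl, rfl⟩⟩)))
  · exact Or.inr (Or.inr (Or.inr (Or.inl ⟨by rw [lab0, lab3]; omega, Or.inr ⟨rfl, rfl⟩⟩)))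
  · refine Or.inr (Or.inr (Or.inr (Or.inr ⟨?_, Or.inl ⟨rfl, hb, hbn⟩⟩)))
    rw [lab0, lab_ge n b hb]; omega
  · refine Or.inr (Or.inr (Or.inr (Or.inr ⟨?_, Or.inr ⟨rfl, ha, han⟩⟩)))
    rw [lab0, lab_ge n a ha]; omega

lemma lab_arith (n a b c d : ℕ) (hn : 5 ≤ n)
    (h1 : Q n a b) (h2 : Q n c d)
    (hw : lab n a + lab n b = lab n c + lab n d) :
    (a = c ∧ b = d) ∨ (a = d ∧ b = c) := by
  have w1 := weight_val n a b h1
  have w2 := weight_val n c d h2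
  omega

set_option maxHeartbeats 1000000 in
lemma adj_class {n : ℕ} {a b : Fin n} (h : (cycleStar 4 n).Adj a b) : Q n a.val b.val := by
  rw [cycleStar, SimpleGraph.fromRel_adj] at h
  obtain ⟨hne, h⟩ := h
  have hne' : a.val ≠ b.val := fun hv => hne (Fin.ext hv)
  have hb := b.isLt
  have ha := a.isLt
  unfold Q
  omega

lemma adj_of_Q {n : ℕ} {a b : Fin n} (h : Q n a.val b.val) : (cycleStar 4 n).Adj a b := by
  rw [cycleStar, SimpleGraph.fromRel_adj]
  constructor
  · intro hab; rw [hab] at h; unfold Q at h; omega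
  · unfold Q at h; omega

lemma ew_mk {V : Type*} (φ : V → ℕ) (a b : V) : edgeWeight φ s(a, b) = φ a + φ b := rfl

theorem es_cycleStar_four (n : ℕ) (hn : 5 ≤ n) :
    edgeIrregularityStrength (cycleStar 4 n) = n - 2 := by
  have hmem : (n - 2) ∈ {k | ∃ φ : Fin n → ℕ, IsEdgeIrregularLabeling (cycleStar 4 n) k φ} := by
    refine ⟨fun i => lab n i.val, ?_, ?_⟩
    · intro v
      have hv := v.isLt
      rw [Finset.mem_Icc]
      show 1 ≤ lab n v.val ∧ lab n v.val ≤ n - 2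
      unfold lab
      split_ifs <;> omega
    · intro e he f hf hef
      induction e using Sym2.ind with | _ a b => ?_
      induction f using Sym2.ind with | _ c d => ?_
      rw [SimpleGraph.mem_edgeSet] at he hf
      rw [ew_mk, ew_mk] at hef
      have := lab_arith n a.val b.val c.val d.val hn (adj_class he) (adj_class hf) hef
      rw [Sym2.eq_iff]
      rcases this with ⟨h1, h2⟩ | ⟨h1, h2⟩
      · exact Or.inl ⟨Fin.ext h1, Fin.ext h2⟩
      · exact Or.inr ⟨Fin.ext h1, Fin.ext h2⟩
  have hlb : ∀ k ∈ {k | ∃ φ : Fin n → ℕ, IsEdgeIrregularLabeling (cycleStar 4 n) k φ},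
      n - 2 ≤ k := by
    rintro k ⟨φ, hφ1, hφ2⟩
    haveI : NeZero n := ⟨by omega⟩
    have hn0 : 0 < n := by omega
    set g : ℕ → Fin n := fun m =>
      ⟨(if m = 0 then 1 else if m = 1 then 3 else m + 2) % n, Nat.mod_lt _ hn0⟩ with hg
    have hgval : ∀ m, m < n - 2 →
        (g m).val = if m = 0 then 1 else if m = 1 then 3 else m + 2 := by
      intro m hm
      simp only [hg]
      exact Nat.mod_eq_of_lt (by split_ifs <;> omega)
    have hQ : ∀ m, m < n - 2 → Q n (0 : Fin n).val (g m).val := by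
      intro m hm
      rw [Fin.val_zero, hgval m hm]
      unfold Q
      split_ifs <;> omega
    have hinj : Set.InjOn (fun m => φ (g m)) (Finset.range (n - 2)) := by
      intro m hm m' hm' heq
      rw [Finset.coe_range, Set.mem_Iio] at hm hm'
      have e1 : s((0 : Fin n), g m) ∈ (cycleStar 4 n).edgeSet :=
        (SimpleGraph.mem_edgeSet _).mpr (adj_of_Q (hQ m hm))
      have e2 : s((0 : Fin n), g m') ∈ (cycleStar 4 n).edgeSet :=
        (SimpleGraph.mem_edgeSet _).mpr (adj_of_Q (hQ m' hm'))
      have heq2 : edgeWeight φ s((0 : Fin n), g m) = edgeWeight φ s((0 : Fin n), g m') := by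
        rw [ew_mk, ew_mk]
        simpa using congrArg (fun x => φ (0 : Fin n) + x) heq
      have := hφ2 e1 e2 heq2
      rw [Sym2.eq_iff] at this
      have v1 := hgval m hm
      have v2 := hgval m' hm'
      rcases this with ⟨-, h2⟩ | ⟨h1, h2⟩
      · have : (g m).val = (g m').val := congrArg Fin.val h2
        rw [v1, v2] at this
        split_ifs at this <;> omega
      · have : (g m).val = (0 : Fin n).val := congrArg Fin.val h2
        rw [v1, Fin.val_zero] at this
        split_ifs at this <;> omega
    have hcard := Finset.card_le_card_of_injOn (fun m => φ (g m))
      (fun m _ => hφ1 (g m)) hinj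
    rw [Finset.card_range, Nat.card_Icc] at hcard
    omega
  exact le_antisymm (Nat.sInf_le hmem) (le_csInf ⟨_, hmem⟩ hlb)
end

section
/- For every integer n ≥ 7, the edge irregularity strength of the cycle-star graph CS_{5,n−5} equals n − 3. -/
/-- The explicit labeling (as a function of the vertex value). -/
def csF (n : ℕ) : ℕ → ℕ := fun m =>
  if m = 0 then 1 else if m = 1 then n - 4 else if m = 2 then 3
  else if m = 3 then n - 3 else if m = 4 then n - 3 else m - 4

/-- Decode an edge from its weight. -/
def csDec (n : ℕ) (hn : 7 ≤ n) : ℕ → Sym2 (Fin n) := fun w =>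
  if _ : w + 4 ≤ n then s((⟨0, by omega⟩ : Fin n), ⟨w + 3, by omega⟩)
  else if w = n - 3 then s((⟨0, by omega⟩ : Fin n), ⟨1, by omega⟩)
  else if w = n - 2 then s((⟨0, by omega⟩ : Fin n), ⟨4, by omega⟩)
  else if w = n - 1 then s((⟨1, by omega⟩ : Fin n), ⟨2, by omega⟩)
  else if w = n then s((⟨2, by omega⟩ : Fin n), ⟨3, by omega⟩)
  else s((⟨3, by omega⟩ : Fin n), ⟨4, by omega⟩)

lemma csDec_ordered (n : ℕ) (hn : 7 ≤ n) (a b : Fin n)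
    (h : (a.val < 5 ∧ b.val < 5 ∧ b.val = (a.val + 1) % 5) ∨ (a.val = 0 ∧ 5 ≤ b.val)) :
    csDec n hn (csF n a.val + csF n b.val) = s(a, b) := by
  have hbn := b.isLt
  rcases h with ⟨ha5, hb5, hmod⟩ | ⟨ha0, hb5⟩
  · have hcase : a.val = 0 ∧ b.val = 1 ∨ a.val = 1 ∧ b.val = 2 ∨ a.val = 2 ∧ b.val = 3 ∨
        a.val = 3 ∧ b.val = 4 ∨ a.val = 4 ∧ b.val = 0 := by omega
    rcases hcase with ⟨ha, hb⟩ | ⟨ha, hb⟩ | ⟨ha, hb⟩ | ⟨ha, hb⟩ | ⟨ha, hb⟩ <;>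
      rw [ha, hb] <;> simp only [csF] <;> norm_num <;> rw [csDec]
    · rw [dif_neg (by omega), if_pos (by omega)]
      exact Sym2.eq_iff.mpr (Or.inl ⟨(Fin.ext ha.symm), (Fin.ext hb.symm)⟩)
    · rw [dif_neg (by omega), if_neg (by omega), if_neg (by omega), if_pos (by omega)]
      exact Sym2.eq_iff.mpr (Or.inl ⟨(Fin.ext ha.symm), (Fin.ext hb.symm)⟩)
    · rw [dif_neg (by omega), if_neg (by omega), if_neg (by omega), if_neg (by omega),
        if_pos (by omega)]
      exact Sym2.eq_iff.mpr (Or.inl ⟨(Fin.ext ha.symm), (Fin.ext hb.symm)⟩)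
    · rw [dif_neg (by omega), if_neg (by omega), if_neg (by omega), if_neg (by omega),
        if_neg (by omega)]
      exact Sym2.eq_iff.mpr (Or.inl ⟨(Fin.ext ha.symm), (Fin.ext hb.symm)⟩)
    · rw [dif_neg (by omega), if_neg (by omega), if_pos (by omega)]
      exact Sym2.eq_iff.mpr (Or.inr ⟨(Fin.ext hb.symm), (Fin.ext ha.symm)⟩)
  · have hFa : csF n a.val = 1 := by rw [ha0]; simp [csF]
    have hFb : csF n b.val = b.val - 4 := by
      simp only [csF]; split_ifs <;> omega
    rw [hFa, hFb, csDec, dif_pos (by omega)]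
    exact Sym2.eq_iff.mpr (Or.inl ⟨(Fin.ext ha0.symm),
      (Fin.ext (show 1 + (b.val - 4) + 3 = b.val by omega))⟩)

lemma csDec_edge (n : ℕ) (hn : 7 ≤ n) (e : Sym2 (Fin n))
    (he : e ∈ (cycleStar 5 n).edgeSet) :
    csDec n hn (edgeWeight (fun v => csF n v.val) e) = e := by
  induction e using Sym2.ind with
  | _ a b =>
    rw [SimpleGraph.mem_edgeSet, cycleStar, SimpleGraph.fromRel_adj] at he
    obtain ⟨hne, h | h⟩ := he
    · rw [edgeWeight, Sym2.lift_mk]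
      exact csDec_ordered n hn a b h
    · rw [edgeWeight, Sym2.lift_mk]
      show csDec n hn (csF n a.val + csF n b.val) = s(a, b)
      rw [Nat.add_comm, Sym2.eq_swap]
      exact csDec_ordered n hn b a h

lemma cs_mem (n : ℕ) (hn : 7 ≤ n) :
    ∃ φ : Fin n → ℕ, IsEdgeIrregularLabeling (cycleStar 5 n) (n - 3) φ := by
  refine ⟨fun v => csF n v.val, ?_, ?_⟩
  · intro v
    have := v.isLt
    simp only [Finset.mem_Icc, csF]
    split_ifs <;> omega
  · intro e he f hf hw
    rw [← csDec_edge n hn e he, ← csDec_edge n hn f hf, hw]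

lemma cs_lower (n k : ℕ) (hn : 7 ≤ n)
    (h : ∃ φ : Fin n → ℕ, IsEdgeIrregularLabeling (cycleStar 5 n) k φ) : n - 3 ≤ k := by
  obtain ⟨φ, hmem, hinj⟩ := h
  set z : Fin n := ⟨0, by omega⟩ with hz
  have hadj : ∀ v : Fin n, (v.val = 1 ∨ v.val = 4 ∨ 5 ≤ v.val) → (cycleStar 5 n).Adj z v := by
    intro v hv
    rw [cycleStar, SimpleGraph.fromRel_adj]
    have hzv : z.val = 0 := rfl
    constructor
    · intro hEq
      have : v.val = 0 := by rw [← hEq]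
      omega
    · rcases hv with h1 | h4 | h5
      · exact Or.inl (Or.inl ⟨by omega, by omega, by omega⟩)
      · exact Or.inr (Or.inl ⟨by omega, by omega, by omega⟩)
      · exact Or.inl (Or.inr ⟨hzv, h5⟩)
  have hφinj : ∀ u v : Fin n, (u.val = 1 ∨ u.val = 4 ∨ 5 ≤ u.val) →
      (v.val = 1 ∨ v.val = 4 ∨ 5 ≤ v.val) → φ u = φ v → u = v := by
    intro u v hu hv hφ
    have e1 : s(z, u) ∈ (cycleStar 5 n).edgeSet := ((cycleStar 5 n).mem_edgeSet).mpr (hadj u hu)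
    have e2 : s(z, v) ∈ (cycleStar 5 n).edgeSet := ((cycleStar 5 n).mem_edgeSet).mpr (hadj v hv)
    have hww : edgeWeight φ s(z, u) = edgeWeight φ s(z, v) := by
      rw [edgeWeight, Sym2.lift_mk, Sym2.lift_mk]
      show φ z + φ u = φ z + φ v
      rw [hφ]
    have := hinj e1 e2 hww
    rcases Sym2.eq_iff.mp this with ⟨_, h2⟩ | ⟨h1, _⟩
    · exact h2
    · exfalso
      have : v.val = 0 := by rw [← h1]
      omega
  set g : Fin (n - 3) → Fin n := fun i =>
      ⟨if i.val = 0 then 1 else if i.val = 1 then 4 else i.val + 3, by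
        have := i.isLt; split_ifs <;> omega⟩ with hg
  have hgval : ∀ i : Fin (n - 3),
      (g i).val = (if i.val = 0 then 1 else if i.val = 1 then 4 else i.val + 3) := fun i => rfl
  have hgcond : ∀ i : Fin (n - 3), (g i).val = 1 ∨ (g i).val = 4 ∨ 5 ≤ (g i).val := by
    intro i
    rw [hgval]
    split_ifs <;> omega
  have hcard : (Finset.univ : Finset (Fin (n - 3))).card ≤ (Finset.Icc 1 k).card := by
    apply Finset.card_le_card_of_injOn (fun i => φ (g i)) (fun i _ => hmem (g i))
    intro i _ j _ hij
    have hgij : g i = g j := hφinj _ _ (hgcond i) (hgcond j) hij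
    have : (g i).val = (g j).val := by rw [hgij]
    rw [hgval, hgval] at this
    have hi := i.isLt; have hj := j.isLt
    apply Fin.ext
    split_ifs at this <;> omega
  simpa using hcard

theorem es_cycleStar_five (n : ℕ) (hn : 7 ≤ n) :
    edgeIrregularityStrength (cycleStar 5 n) = n - 3 := by
  have hmem : (n - 3) ∈ {k | ∃ φ : Fin n → ℕ, IsEdgeIrregularLabeling (cycleStar 5 n) k φ} :=
    cs_mem n hn
  exact le_antisymm (Nat.sInf_le hmem)
    (le_csInf ⟨_, hmem⟩ (fun k hk => cs_lower n k hn hk))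
end

section
/- For n ∈ {7, 8}, the edge irregularity strength of the cycle-star graph CS_{6,n−6} equals n − 3. -/
open Finset

section EdgeIrregularity

variable {V : Type*} {G : SimpleGraph V} [Fintype G.edgeSet] {k : ℕ} {φ : V → ℕ}

theorem IsEdgeIrregularLabeling.card_edgeFinset_le (h : IsEdgeIrregularLabeling G k φ) :
    #G.edgeFinset ≤ 2 * k - 1 := by
  have hweights : #G.edgeFinset ≤ #(Icc 2 (2 * k)) := by
    refine card_le_card_of_injOn (edgeWeight φ) ?_ ?_
    · intro e _
      induction e using Sym2.ind with
      | _ u v =>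
        have hu := mem_Icc.mp (h.1 u)
        have hv := mem_Icc.mp (h.1 v)
        simp only [edgeWeight, Sym2.lift_mk, coe_Icc, Set.mem_Icc]
        omega
    · intro e he f hf hef
      exact h.2 (SimpleGraph.mem_edgeFinset.mp he) (SimpleGraph.mem_edgeFinset.mp hf) hef
  rwa [Nat.card_Icc] at hweights

-- `2 * (k - 1) - 1` is the most edges a `(k - 1)`-labeling can separate.
theorem edgeIrregularityStrength_eq_of_isEdgeIrregularLabeling
    (h : IsEdgeIrregularLabeling G k φ) (hk : 2 * (k - 1) - 1 < #G.edgeFinset) :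
    edgeIrregularityStrength G = k := by
  refine le_antisymm (Nat.sInf_le ⟨φ, h⟩) (le_csInf ⟨k, φ, h⟩ ?_)
  rintro k' ⟨ψ, hψ⟩
  have := hψ.card_edgeFinset_le
  omega

end EdgeIrregularity

instance (k n : ℕ) : DecidableRel (cycleStar k n).Adj := fun a b =>
  decidable_of_iff _ (SimpleGraph.fromRel_adj _ a b).symm

lemma lt_and_lt_and_eq_add_one_mod_iff {k a b : ℕ} :
    a < k ∧ b < k ∧ b = (a + 1) % k ↔ b = a + 1 ∧ b < k ∨ a + 1 = k ∧ b = 0 := by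
  rcases Nat.lt_or_ge (a + 1) k with h | h
  · rw [Nat.mod_eq_of_lt h]
    omega
  · rcases Nat.le_iff_lt_or_eq.mp h with h' | h'
    · omega
    · rw [← h', Nat.mod_self]
      omega

lemma cycleStar_adj_iff {k n : ℕ} {a b : Fin n} :
    (cycleStar k n).Adj a b ↔ a.val ≠ b.val ∧
      ((b.val = a.val + 1 ∧ b.val < k ∨ a.val + 1 = k ∧ b.val = 0 ∨ a.val = 0 ∧ k ≤ b.val) ∨
       (a.val = b.val + 1 ∧ a.val < k ∨ b.val + 1 = k ∧ a.val = 0 ∨ b.val = 0 ∧ k ≤ a.val)) := by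
  simp only [cycleStar, SimpleGraph.fromRel_adj, ne_eq, Fin.ext_iff,
    lt_and_lt_and_eq_add_one_mod_iff, or_assoc]

theorem card_edgeFinset_cycleStar {k n : ℕ} (hk : 3 ≤ k) (hkn : k ≤ n) :
    #(cycleStar k n).edgeFinset = n := by
  have hn : 0 < n := by omega
  -- `edge (k - 1) = s(0, k - 1)` is the edge closing the cycle.
  let edge (j : Fin n) : Sym2 (Fin n) :=
    if h : j.val + 1 < k then s(j, ⟨j.val + 1, by omega⟩) else s(⟨0, hn⟩, j)
  suffices #(univ : Finset (Fin n)) = #(cycleStar k n).edgeFinset by simpa using this.symm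
  refine card_bij (fun j _ => edge j) ?_ ?_ ?_
  · intro j _
    rw [SimpleGraph.mem_edgeFinset]
    dsimp only [edge]
    split_ifs <;> rw [SimpleGraph.mem_edgeSet, cycleStar_adj_iff] <;> dsimp only <;> omega
  · intro i _ j _ hij
    dsimp only [edge] at hij
    rw [Fin.ext_iff]
    split_ifs at hij <;> simp only [Sym2.eq_iff, Fin.ext_iff] at hij <;> omega
  · intro e he
    rw [SimpleGraph.mem_edgeFinset] at he
    induction e using Sym2.ind with
    | _ a b =>
      rw [SimpleGraph.mem_edgeSet, cycleStar_adj_iff] at he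
      wlog hab : b.val = a.val + 1 ∧ b.val < k ∨ a.val + 1 = k ∧ b.val = 0 ∨ a.val = 0 ∧ k ≤ b.val
        generalizing a b
      · rw [Sym2.eq_swap]
        exact this b a ⟨he.1.symm, Or.inl (he.2.resolve_left hab)⟩ (he.2.resolve_left hab)
      refine ⟨if k ≤ b.val then b else a, mem_univ _, ?_⟩
      split_ifs <;> dsimp only [edge] <;> split_ifs <;>
        simp only [Sym2.eq_iff, Fin.ext_iff, true_and, and_true] <;> omega

theorem isEdgeIrregularLabeling_cycleStar_six_seven :
    IsEdgeIrregularLabeling (cycleStar 6 7) 4 ![1, 1, 2, 4, 4, 3, 4] :=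
  ⟨by decide, by rw [Set.injOn_iff_injective]; decide⟩

theorem isEdgeIrregularLabeling_cycleStar_six_eight :
    IsEdgeIrregularLabeling (cycleStar 6 8) 5 ![1, 1, 3, 5, 5, 4, 2, 5] :=
  ⟨by decide, by rw [Set.injOn_iff_injective]; decide⟩

theorem es_cycleStar_six_small (n : ℕ) (hn : n = 7 ∨ n = 8) :
    edgeIrregularityStrength (cycleStar 6 n) = n - 3 := by
  rcases hn with rfl | rfl
  · refine edgeIrregularityStrength_eq_of_isEdgeIrregularLabeling
      isEdgeIrregularLabeling_cycleStar_six_seven ?_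
    rw [card_edgeFinset_cycleStar] <;> norm_num
  · refine edgeIrregularityStrength_eq_of_isEdgeIrregularLabeling
      isEdgeIrregularLabeling_cycleStar_six_eight ?_
    rw [card_edgeFinset_cycleStar] <;> norm_num
end

section
/- For every integer n ≥ 9, the edge irregularity strength of the cycle-star graph CS_{6,n−6} equals n − 4. -/
/-!
In an edge irregular labeling the edges `vu` at a vertex `v` have the distinct weights
`φ v + φ u`, so the neighbours of `v` carry distinct labels and `k ≥ deg v`; the hub `0` of
`CS_{6,n-6}` has degree `n - 4`. Conversely, label the hub `n - 4` and its neighbours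
`1, 5, 6, 7, …, n - 1` bijectively by `1, 3, 2, 4, …, n - 4`: the hub edges get the weights
`n - 3, …, 2n - 8`, while the path `1 - 2 - 3 - 4 - 5`, labelled `1, 1, 2, 2, 3`, gets `2, 3, 4, 5`.
-/

@[simp]
theorem edgeWeight_mk {V : Type*} (φ : V → ℕ) (u v : V) : edgeWeight φ s(u, v) = φ u + φ v :=
  rfl

namespace IsEdgeIrregularLabeling

variable {V : Type*} {G : SimpleGraph V} {k : ℕ} {φ : V → ℕ}

theorem injOn_neighborSet (h : IsEdgeIrregularLabeling G k φ) (v : V) :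
    Set.InjOn φ (G.neighborSet v) := fun u hu w hw huw =>
  Sym2.congr_right.1 <| h.2 (G.mem_edgeSet.2 hu) (G.mem_edgeSet.2 hw) (by simp [huw])

theorem degree_le (h : IsEdgeIrregularLabeling G k φ) (v : V) [Fintype (G.neighborSet v)] :
    G.degree v ≤ k :=
  calc G.degree v = (G.neighborFinset v).card := (G.card_neighborFinset_eq_degree v).symm
    _ ≤ (Finset.Icc 1 k).card :=
      Finset.card_le_card_of_injOn φ (fun u _ => h.1 u) ((h.injOn_neighborSet v).mono (by simp))
    _ = k := by simp

end IsEdgeIrregularLabeling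

theorem edgeIrregularityStrength_eq_of_degree_eq {V : Type*} {G : SimpleGraph V} {k : ℕ}
    {φ : V → ℕ} (h : IsEdgeIrregularLabeling G k φ) (v : V) [Fintype (G.neighborSet v)]
    (hv : G.degree v = k) : edgeIrregularityStrength G = k :=
  IsLeast.csInf_eq ⟨⟨φ, h⟩, fun _ ⟨_, h'⟩ => hv ▸ h'.degree_le v⟩

instance inst_s8 (k n : ℕ) : DecidableRel (cycleStar k n).Adj :=
  inferInstanceAs (DecidableRel (SimpleGraph.fromRel _).Adj)

section CycleStar

variable {k n : ℕ}

theorem cycleStar_adj_zero_iff (hk : 3 ≤ k) (h0 : 0 < n) (j : Fin n) :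
    (cycleStar k n).Adj ⟨0, h0⟩ j ↔ j.val = 1 ∨ j.val = k - 1 ∨ k ≤ j.val := by
  simp only [cycleStar, SimpleGraph.fromRel_adj, ne_eq, Fin.ext_iff, zero_add,
    Nat.mod_eq_of_lt (show 1 < k by omega)]
  rcases (show j.val + 1 < k ∨ j.val + 1 = k ∨ k ≤ j.val by omega) with h | h | h
  · rw [Nat.mod_eq_of_lt h]; omega
  · rw [h, Nat.mod_self]; omega
  · simp only [show ¬j.val < k by omega, false_and, and_false, false_or, true_and]; omega

theorem cycleStar_adj_of_ne_zero {a b : Fin n} (h : (cycleStar k n).Adj a b) (ha : a.val ≠ 0)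
    (hb : b.val ≠ 0) : a.val < k ∧ b.val < k ∧ (b.val = a.val + 1 ∨ a.val = b.val + 1) := by
  simp only [cycleStar, SimpleGraph.fromRel_adj, ne_eq, Fin.ext_iff] at h
  rcases h with ⟨-, (⟨ha', hb', h⟩ | ⟨ha', -⟩) | (⟨hb', ha', h⟩ | ⟨hb', -⟩)⟩
  · rcases lt_or_eq_of_le (show a.val + 1 ≤ k by omega) with hlt | heq
    · rw [Nat.mod_eq_of_lt hlt] at h; omega
    · rw [heq, Nat.mod_self] at h; omega
  · omega
  · rcases lt_or_eq_of_le (show b.val + 1 ≤ k by omega) with hlt | heq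
    · rw [Nat.mod_eq_of_lt hlt] at h; omega
    · rw [heq, Nat.mod_self] at h; omega
  · omega

theorem cycleStar_degree_zero (hk : 3 ≤ k) (hkn : k ≤ n) :
    (cycleStar k n).degree ⟨0, by omega⟩ = n - k + 2 := by
  have hval : ((cycleStar k n).neighborFinset ⟨0, by omega⟩).map Fin.valEmbedding =
      insert 1 (insert (k - 1) (Finset.Ico k n)) := by
    ext x
    simp only [Finset.mem_map, SimpleGraph.mem_neighborFinset, cycleStar_adj_zero_iff hk,
      Fin.valEmbedding_apply, Finset.mem_insert, Finset.mem_Ico]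
    constructor
    · rintro ⟨j, hj, rfl⟩
      omega
    · intro hx
      exact ⟨⟨x, by omega⟩, by simp only; omega, rfl⟩
  rw [← SimpleGraph.card_neighborFinset_eq_degree, ← Finset.card_map, hval,
    Finset.card_insert_of_notMem (by simp only [Finset.mem_insert, Finset.mem_Ico]; omega),
    Finset.card_insert_of_notMem (by simp only [Finset.mem_Ico]; omega),
    Nat.card_Ico]

end CycleStar

def cycleStarSixLabel (n : ℕ) (i : Fin n) : ℕ :=
  if i.val = 0 then n - 4
  else if i.val ≤ 5 then (i.val + 1) / 2
  else if i.val = 6 then 2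
  else i.val - 3

section CycleStarSix

variable {n : ℕ}

theorem cycleStarSixLabel_mem_Icc (hn : 7 ≤ n) (i : Fin n) :
    cycleStarSixLabel n i ∈ Finset.Icc 1 (n - 4) := by
  have := i.isLt
  rw [Finset.mem_Icc, cycleStarSixLabel]
  split_ifs <;> omega

theorem cycleStarSixLabel_injOn_neighborSet (h0 : 0 < n) :
    Set.InjOn (cycleStarSixLabel n) ((cycleStar 6 n).neighborSet ⟨0, h0⟩) := by
  intro i hi j hj hij
  rw [SimpleGraph.mem_neighborSet, cycleStar_adj_zero_iff (by norm_num)] at hi hj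
  simp only [cycleStarSixLabel] at hij
  apply Fin.ext
  split_ifs at hij <;> omega

theorem one_le_cycleStarSixLabel (i : Fin n) (hi : i.val ≠ 0) : 1 ≤ cycleStarSixLabel n i := by
  simp only [cycleStarSixLabel]
  split_ifs <;> omega

theorem cycleStarSixLabel_add_of_adj_of_ne_zero {a b : Fin n} (h : (cycleStar 6 n).Adj a b)
    (ha : a.val ≠ 0) (hb : b.val ≠ 0) :
    2 * (cycleStarSixLabel n a + cycleStarSixLabel n b) = a.val + b.val + 1 := by
  have := cycleStar_adj_of_ne_zero h ha hb
  simp only [cycleStarSixLabel]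
  split_ifs <;> omega

theorem le_edgeWeight_cycleStarSixLabel_of_zero_mem (h0 : 0 < n) {e : Sym2 (Fin n)}
    (he : e ∈ (cycleStar 6 n).edgeSet) (he0 : ⟨0, h0⟩ ∈ e) :
    n - 3 ≤ edgeWeight (cycleStarSixLabel n) e := by
  obtain ⟨j, rfl⟩ := Sym2.mem_iff_exists.1 he0
  have hj : j.val ≠ 0 := fun hj => (cycleStar 6 n).loopless.irrefl _ (by
    rwa [show j = ⟨0, h0⟩ from Fin.ext hj] at he)
  have := one_le_cycleStarSixLabel j hj
  have hlab0 : cycleStarSixLabel n ⟨0, h0⟩ = n - 4 := if_pos rfl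
  rw [edgeWeight_mk, hlab0]
  omega

theorem edgeWeight_cycleStarSixLabel_of_zero_notMem (h0 : 0 < n) {e : Sym2 (Fin n)}
    (he : e ∈ (cycleStar 6 n).edgeSet) (he0 : ⟨0, h0⟩ ∉ e) :
    edgeWeight (cycleStarSixLabel n) e ≤ 5 ∧
      ∀ x, x ∈ e ↔ x.val + 1 = edgeWeight (cycleStarSixLabel n) e ∨
        x.val = edgeWeight (cycleStarSixLabel n) e := by
  induction e using Sym2.ind with
  | _ a b =>
    rw [SimpleGraph.mem_edgeSet] at he
    have ha : a.val ≠ 0 := fun ha => he0 (by simp [Fin.ext_iff, ha])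
    have hb : b.val ≠ 0 := fun hb => he0 (by simp [Fin.ext_iff, hb])
    have hab := cycleStar_adj_of_ne_zero he ha hb
    have hw := cycleStarSixLabel_add_of_adj_of_ne_zero he ha hb
    simp only [edgeWeight_mk, Sym2.mem_iff, Fin.ext_iff]
    exact ⟨by omega, fun x => by omega⟩

theorem cycleStarSixLabel_injOn_edgeSet (hn : 9 ≤ n) :
    Set.InjOn (edgeWeight (cycleStarSixLabel n)) (cycleStar 6 n).edgeSet := by
  have h0 : 0 < n := by omega
  intro e he f hf hw
  by_cases he0 : ⟨0, h0⟩ ∈ e <;> by_cases hf0 : ⟨0, h0⟩ ∈ f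
  · obtain ⟨i, rfl⟩ := Sym2.mem_iff_exists.1 he0
    obtain ⟨j, rfl⟩ := Sym2.mem_iff_exists.1 hf0
    rw [edgeWeight_mk, edgeWeight_mk, Nat.add_left_cancel_iff] at hw
    rw [SimpleGraph.mem_edgeSet] at he hf
    rw [cycleStarSixLabel_injOn_neighborSet h0 he hf hw]
  · have := le_edgeWeight_cycleStarSixLabel_of_zero_mem h0 he he0
    have := (edgeWeight_cycleStarSixLabel_of_zero_notMem h0 hf hf0).1
    omega
  · have := le_edgeWeight_cycleStarSixLabel_of_zero_mem h0 hf hf0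
    have := (edgeWeight_cycleStarSixLabel_of_zero_notMem h0 he he0).1
    omega
  · exact Sym2.ext fun x => by
      rw [(edgeWeight_cycleStarSixLabel_of_zero_notMem h0 he he0).2, (edgeWeight_cycleStarSixLabel_of_zero_notMem h0 hf hf0).2, hw]

end CycleStarSix

theorem es_cycleStar_six (n : ℕ) (hn : 9 ≤ n) :
    edgeIrregularityStrength (cycleStar 6 n) = n - 4 :=
  edgeIrregularityStrength_eq_of_degree_eq
    ⟨cycleStarSixLabel_mem_Icc (by omega), cycleStarSixLabel_injOn_edgeSet hn⟩ ⟨0, by omega⟩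
    (by rw [cycleStar_degree_zero (by norm_num) (by omega)]; omega)
end

section
/- The edge irregularity strength of the cycle-star graph CS_{7,1} (the cycle of length 7 with one pendant leaf attached to a cycle vertex, so n = 8) equals 5, i.e., es(CS_{7,1}) = n − 3 = 5. -/
instance instDecCS : DecidableRel (cycleStar 7 8).Adj := fun a b => by
  unfold cycleStar SimpleGraph.fromRel
  exact inferInstanceAs (Decidable (_ ∧ _))

theorem es_cycleStar_seven_one :
    edgeIrregularityStrength (cycleStar 7 8) = 5 := by
  have hmem : (5 : ℕ) ∈ {k | ∃ φ : Fin 8 → ℕ, IsEdgeIrregularLabeling (cycleStar 7 8) k φ} := by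
    refine ⟨![1, 1, 2, 2, 5, 4, 4, 5], ?_, ?_⟩
    · decide
    · have : ∀ a b : Sym2 (Fin 8), a ∈ (cycleStar 7 8).edgeSet →
          b ∈ (cycleStar 7 8).edgeSet →
          edgeWeight ![1, 1, 2, 2, 5, 4, 4, 5] a = edgeWeight ![1, 1, 2, 2, 5, 4, 4, 5] b →
          a = b := by decide
      exact fun a ha b hb hab => this a b ha hb hab
  have hcard : (cycleStar 7 8).edgeFinset.card = 8 := by decide
  refine le_antisymm (Nat.sInf_le hmem) (le_csInf ⟨5, hmem⟩ ?_)
  rintro k ⟨φ, hφ1, hφ2⟩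
  by_contra hk
  push_neg at hk
  have hsub : ∀ e ∈ (cycleStar 7 8).edgeFinset, edgeWeight φ e ∈ Finset.Icc 2 (2 * k) := by
    intro e _
    induction e using Sym2.ind with
    | _ u v =>
      have hu := hφ1 u
      have hv := hφ1 v
      simp only [Finset.mem_Icc] at *
      have heq : edgeWeight φ s(u, v) = φ u + φ v := rfl
      rw [heq]
      omega
  have hinj : Set.InjOn (edgeWeight φ) ((cycleStar 7 8).edgeFinset : Set (Sym2 (Fin 8)))  := by
    intro a ha b hb hab
    exact hφ2 (by simpa using ha) (by simpa using hb) hab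
  have := Finset.card_le_card_of_injOn (edgeWeight φ) hsub hinj
  rw [hcard, Nat.card_Icc] at this
  omega
end

section
/- For every integerن n ≥ 11, the edge irregularity strength of the cycle-star graph CS_{7,n−7} equals n − 5. -/
/-- ℕ-level relation defining `cycleStar 7`. -/
def csRel (a b : ℕ) : Prop :=
  (a < 7 ∧ b < 7 ∧ b = (a + 1) % 7) ∨ (a = 0 ∧ 7 ≤ b)

lemma csRel_cases {a b : ℕ} (hab : csRel a b) :
    (a=0∧b=1)∨(a=1∧b=2)∨(a=2∧b=3)∨(a=3∧b=4)∨(a=4∧b=5)∨(a=5∧b=6)∨(a=6∧b=0)∨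
      (a=0 ∧ ∃ w, b = w + 7) := by
  have H : (a=0∧b=1)∨(a=1∧b=2)∨(a=2∧b=3)∨(a=3∧b=4)∨(a=4∧b=5)∨(a=5∧b=6)∨(a=6∧b=0)∨
      (a=0 ∧ 7 ≤ b) := by
    rcases hab with ⟨h1, h2, h3⟩ | h
    · interval_cases a <;> omega
    · omega
  rcases H with h|h|h|h|h|h|h|⟨h1,h2⟩
  · exact Or.inl h
  · exact Or.inr (Or.inl h)
  · exact Or.inr (Or.inr (Or.inl h))
  · exact Or.inr (Or.inr (Or.inr (Or.inl h)))
  · exact Or.inr (Or.inr (Or.inr (Or.inr (Or.inl h))))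
  · exact Or.inr (Or.inr (Or.inr (Or.inr (Or.inr (Or.inl h)))))
  · exact Or.inr (Or.inr (Or.inr (Or.inr (Or.inr (Or.inr (Or.inl h))))))
  · exact Or.inr (Or.inr (Or.inr (Or.inr (Or.inr (Or.inr (Or.inr ⟨h1, b - 7, by omega⟩))))))

def phiA (n : ℕ) : ℕ → ℕ
  | 0 => n - 5
  | 1 => 1
  | 2 => 2
  | 3 => 2
  | 4 => 3
  | 5 => 4
  | 6 => 2
  | (v+7) => v + 3

lemma keyA {n : ℕ} (hn : 12 ≤ n) {a b c d : ℕ}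
    (hab : csRel a b) (hcd : csRel c d)
    (h : phiA n a + phiA n b = phiA n c + phiA n d) :
    (a = c ∧ b = d) ∨ (a = d ∧ b = c) := by
  rcases csRel_cases hab with ⟨rfl,rfl⟩|⟨rfl,rfl⟩|⟨rfl,rfl⟩|⟨rfl,rfl⟩|⟨rfl,rfl⟩|⟨rfl,rfl⟩|⟨rfl,rfl⟩|⟨rfl,w,rfl⟩ <;>
  rcases csRel_cases hcd with ⟨rfl,rfl⟩|⟨rfl,rfl⟩|⟨rfl,rfl⟩|⟨rfl,rfl⟩|⟨rfl,rfl⟩|⟨rfl,rfl⟩|⟨rfl,rfl⟩|⟨rfl,w',rfl⟩ <;>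
  simp only [phiA] at h <;> omega

def phiB : ℕ → ℕ
  | 0 => 1
  | 1 => 2
  | 2 => 6
  | 3 => 4
  | 4 => 5
  | 5 => 6
  | 6 => 6
  | 7 => 1
  | 8 => 3
  | 9 => 4
  | _ => 5

lemma csRel_cases11 {a b : ℕ} (hb : b < 11) (hab : csRel a b) :
    (a=0∧b=1)∨(a=1∧b=2)∨(a=2∧b=3)∨(a=3∧b=4)∨(a=4∧b=5)∨(a=5∧b=6)∨(a=6∧b=0)∨
      (a=0∧b=7)∨(a=0∧b=8)∨(a=0∧b=9)∨(a=0∧b=10) := by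
  rcases hab with ⟨h1, h2, h3⟩ | h
  · interval_cases a <;> omega
  · omega

lemma keyB {a b c d : ℕ} (hb : b < 11) (hd : d < 11)
    (hab : csRel a b) (hcd : csRel c d)
    (h : phiB a + phiB b = phiB c + phiB d) :
    (a = c ∧ b = d) ∨ (a = d ∧ b = c) := by
  rcases csRel_cases11 hb hab with ⟨rfl,rfl⟩|⟨rfl,rfl⟩|⟨rfl,rfl⟩|⟨rfl,rfl⟩|⟨rfl,rfl⟩|⟨rfl,rfl⟩|⟨rfl,rfl⟩|⟨rfl,rfl⟩|⟨rfl,rfl⟩|⟨rfl,rfl⟩|⟨rfl,rfl⟩ <;>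
  rcases csRel_cases11 hd hcd with ⟨rfl,rfl⟩|⟨rfl,rfl⟩|⟨rfl,rfl⟩|⟨rfl,rfl⟩|⟨rfl,rfl⟩|⟨rfl,rfl⟩|⟨rfl,rfl⟩|⟨rfl,rfl⟩|⟨rfl,rfl⟩|⟨rfl,rfl⟩|⟨rfl,rfl⟩ <;>
  simp only [phiB] at h <;> omega



lemma cycleStar_adj {n : ℕ} {u v : Fin n} :
    (cycleStar 7 n).Adj u v ↔ u ≠ v ∧ (csRel u.val v.val ∨ csRel v.val u.val) := by
  simp [cycleStar, SimpleGraph.fromRel_adj, csRel]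

/-- Upper bound construction. -/
lemma upper_aux (n : ℕ) (ψ : ℕ → ℕ)
    (hbound : ∀ v, v < n → ψ v ∈ Finset.Icc 1 (n - 5))
    (hkey : ∀ a b c d : ℕ, a < n → b < n → c < n → d < n → csRel a b → csRel c d →
      ψ a + ψ b = ψ c + ψ d → (a = c ∧ b = d) ∨ (a = d ∧ b = c)) :
    ∃ φ : Fin n → ℕ, IsEdgeIrregularLabeling (cycleStar 7 n) (n - 5) φ := by
  refine ⟨fun v => ψ v.val, fun v => hbound v.val v.isLt, ?_⟩
  intro e he f hf hw
  induction e using Sym2.ind with | _ a b => ?_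
  induction f using Sym2.ind with | _ c d => ?_
  rw [SimpleGraph.mem_edgeSet] at he hf
  rw [cycleStar_adj] at he hf
  obtain ⟨hne, hr⟩ := he
  obtain ⟨hne', hr'⟩ := hf
  simp only [edgeWeight, Sym2.lift_mk] at hw
  rw [Sym2.eq_iff]
  have val_eq : ∀ x y : Fin n, x.val = y.val → x = y := fun x y h => Fin.ext h
  rcases hr with h1 | h1 <;> rcases hr' with h2 | h2
  · rcases hkey _ _ _ _ a.isLt b.isLt c.isLt d.isLt h1 h2 hw with ⟨e1,e2⟩|⟨e1,e2⟩
    · exact Or.inl ⟨val_eq _ _ e1, val_eq _ _ e2⟩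
    · exact Or.inr ⟨val_eq _ _ e1, val_eq _ _ e2⟩
  · rcases hkey _ _ _ _ a.isLt b.isLt d.isLt c.isLt h1 h2 (by omega) with ⟨e1,e2⟩|⟨e1,e2⟩
    · exact Or.inr ⟨val_eq _ _ e1, val_eq _ _ e2⟩
    · exact Or.inl ⟨val_eq _ _ e1, val_eq _ _ e2⟩
  · rcases hkey _ _ _ _ b.isLt a.isLt c.isLt d.isLt h1 h2 (by omega) with ⟨e1,e2⟩|⟨e1,e2⟩
    · exact Or.inr ⟨val_eq _ _ e2, val_eq _ _ e1⟩
    · exact Or.inl ⟨val_eq _ _ e2, val_eq _ _ e1⟩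
  · rcases hkey _ _ _ _ b.isLt a.isLt d.isLt c.isLt h1 h2 (by omega) with ⟨e1,e2⟩|⟨e1,e2⟩
    · exact Or.inl ⟨val_eq _ _ e2, val_eq _ _ e1⟩
    · exact Or.inr ⟨val_eq _ _ e2, val_eq _ _ e1⟩

/-- Lower bound. -/
lemma lower_aux {n k : ℕ} (hn : 11 ≤ n) (φ : Fin n → ℕ)
    (h : IsEdgeIrregularLabeling (cycleStar 7 n) k φ) : n - 5 ≤ k := by
  obtain ⟨hb, hinj⟩ := h
  set v0 : Fin n := ⟨0, by omega⟩ with hv0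
  set ι : Fin (n - 5) → Fin n := fun i =>
    ⟨if i.val = 0 then 1 else if i.val = 1 then 6 else i.val + 5, by
      have := i.isLt; split_ifs <;> omega⟩ with hι
  have hadj : ∀ i : Fin (n - 5), (cycleStar 7 n).Adj v0 (ι i) := by
    intro i
    rw [cycleStar_adj]
    have hval : (ι i).val = (if i.val = 0 then 1 else if i.val = 1 then 6 else i.val + 5) := rfl
    constructor
    · intro hc
      have : v0.val = (ι i).val := by rw [hc]
      rw [hval] at this
      simp only [hv0] at this
      split_ifs at this <;> omega
    · rw [hval]; simp only [hv0]
      split_ifs with h1 h2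
      · exact Or.inl (Or.inl ⟨by omega, by omega, by omega⟩)
      · exact Or.inr (Or.inl ⟨by omega, by omega, by omega⟩)
      · exact Or.inl (Or.inr ⟨rfl, by omega⟩)
  have hιinj : Function.Injective ι := by
    intro i j hij
    have hij' : (ι i).val = (ι j).val := by rw [hij]
    simp only [hι] at hij'
    apply Fin.ext
    split_ifs at hij' <;> omega
  have hφinj : Function.Injective (fun i => φ (ι i)) := by
    intro i j hij
    by_contra hne
    have hii : ι i ≠ ι j := fun hc => hne (hιinj hc)
    have hwe : edgeWeight φ s(v0, ι i) = edgeWeight φ s(v0, ι j) := by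
      simp only [edgeWeight, Sym2.lift_mk]
      simpa using congrArg (fun x => φ v0 + x) hij
    have := hinj (hadj i) (hadj j) hwe
    rw [Sym2.eq_iff] at this
    rcases this with ⟨_, h2⟩ | ⟨h1, _⟩
    · exact hii h2
    · exact ((cycleStar 7 n).ne_of_adj (hadj j)) h1
  have hcard : (Finset.univ : Finset (Fin (n - 5))).card ≤ (Finset.Icc 1 k).card := by
    apply Finset.card_le_card_of_injOn (fun i => φ (ι i))
    · intro i _; exact hb (ι i)
    · exact hφinj.injOn
  simpa [Nat.card_Icc] using hcard

theorem es_cycleStar_seven (n : ℕ) (hn : 11 ≤ n) :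
    edgeIrregularityStrength (cycleStar 7 n) = n - 5 := by
  have hmem : ∃ φ : Fin n → ℕ, IsEdgeIrregularLabeling (cycleStar 7 n) (n - 5) φ := by
    rcases eq_or_lt_of_le hn with h11 | h12
    · -- n = 11
      apply upper_aux n phiB
      · intro v hv
        rw [Finset.mem_Icc]
        have hv' : v < 11 := by omega
        interval_cases v <;> simp [phiB] <;> omega
      · intro a b c d _ hb _ hd hab hcd h
        exact keyB (by omega) (by omega) hab hcd h
    · have h12' : 12 ≤ n := h12
      apply upper_aux n (phiA n)
      · intro v hv
        rw [Finset.mem_Icc]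
        rcases Nat.lt_or_ge v 7 with h | h
        · interval_cases v <;> simp [phiA] <;> omega
        · obtain ⟨w, rfl⟩ : ∃ w, v = w + 7 := ⟨v - 7, by omega⟩
          simp only [phiA]; omega
      · intro a b c d _ _ _ _ hab hcd h
        exact keyA h12' hab hcd h
  have hlow : ∀ m ∈ {k | ∃ φ : Fin n → ℕ, IsEdgeIrregularLabeling (cycleStar 7 n) k φ}, n - 5 ≤ m := by
    rintro m ⟨φ, hφ⟩
    exact lower_aux hn φ hφ
  exact le_antisymm (Nat.sInf_le hmem) (le_csInf ⟨_, hmem⟩ hlow)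
end

section
/- For every integer n ≥ 4, the cycle-star graph CS_{3,n−3} admits an edge irregular (n−1)-labeling; that is, there exists a vertex labeling φ : V(CS_{3,n−3}) → {1,2,...,n−1} such that the weights w_φ(uv) = φ(u)+φ(v) of the n edges are pairwise distinct. -/
def csLabel (n : ℕ) (i : Fin n) : ℕ :=
  if i.val = 0 then 1 else if i.val = 1 then n - 2 else if i.val = 2 then n - 1
  else i.val - 2

lemma csLabel_zero {n : ℕ} {i : Fin n} (h : i.val = 0) : csLabel n i = 1 := by
  simp [csLabel, h]

lemma csLabel_one {n : ℕ} {i : Fin n} (h : i.val = 1) : csLabel n i = n - 2 := by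
  simp [csLabel, h]

lemma csLabel_two {n : ℕ} {i : Fin n} (h : i.val = 2) : csLabel n i = n - 1 := by
  simp [csLabel, h]

lemma csLabel_leaf {n : ℕ} {i : Fin n} (h : 3 ≤ i.val) : csLabel n i = i.val - 2 := by
  unfold csLabel
  split_ifs <;> omega

lemma cs_adj_cases {n : ℕ} {a b : Fin n} (h : (cycleStar 3 n).Adj a b) :
    (a.val = 0 ∧ b.val = 1) ∨ (a.val = 1 ∧ b.val = 2) ∨ (a.val = 2 ∧ b.val = 0) ∨
    (b.val = 0 ∧ a.val = 1) ∨ (b.val = 1 ∧ a.val = 2) ∨ (b.val = 2 ∧ a.val = 0) ∨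
    (a.val = 0 ∧ 3 ≤ b.val) ∨ (b.val = 0 ∧ 3 ≤ a.val) := by
  rw [cycleStar, SimpleGraph.fromRel_adj] at h
  obtain ⟨hne, h⟩ := h
  have hne' : a.val ≠ b.val := fun hv => hne (Fin.ext hv)
  omega

lemma cs_weight_char {n : ℕ} (hn : 4 ≤ n) {a b : Fin n}
    (h : (cycleStar 3 n).Adj a b) :
    (csLabel n a + csLabel n b = n - 1 ∧
      ((a.val = 0 ∧ b.val = 1) ∨ (a.val = 1 ∧ b.val = 0))) ∨
    (csLabel n a + csLabel n b = n ∧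
      ((a.val = 0 ∧ b.val = 2) ∨ (a.val = 2 ∧ b.val = 0))) ∨
    (csLabel n a + csLabel n b = 2 * n - 3 ∧
      ((a.val = 1 ∧ b.val = 2) ∨ (a.val = 2 ∧ b.val = 1))) ∨
    (2 ≤ csLabel n a + csLabel n b ∧ csLabel n a + csLabel n b ≤ n - 2 ∧
      ((a.val = 0 ∧ b.val = csLabel n a + csLabel n b + 1) ∨
       (b.val = 0 ∧ a.val = csLabel n a + csLabel n b + 1))) := by
  have hb := b.isLt
  have ha := a.isLt
  rcases cs_adj_cases h with ⟨p1, p2⟩ | ⟨p1, p2⟩ | ⟨p1, p2⟩ | ⟨p1, p2⟩ | ⟨p1, p2⟩ |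
    ⟨p1, p2⟩ | ⟨p1, p2⟩ | ⟨p1, p2⟩
  · rw [csLabel_zero p1, csLabel_one p2]; exact Or.inl ⟨by omega, Or.inl ⟨p1, p2⟩⟩
  · rw [csLabel_one p1, csLabel_two p2]
    exact Or.inr (Or.inr (Or.inl ⟨by omega, Or.inl ⟨p1, p2⟩⟩))
  · rw [csLabel_two p1, csLabel_zero p2]
    exact Or.inr (Or.inl ⟨by omega, Or.inr ⟨p1, p2⟩⟩)
  · rw [csLabel_zero p1, csLabel_one p2]; exact Or.inl ⟨by omega, Or.inr ⟨p2, p1⟩⟩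
  · rw [csLabel_one p1, csLabel_two p2]
    exact Or.inr (Or.inr (Or.inl ⟨by omega, Or.inr ⟨p2, p1⟩⟩))
  · rw [csLabel_two p1, csLabel_zero p2]
    exact Or.inr (Or.inl ⟨by omega, Or.inl ⟨p2, p1⟩⟩)
  · rw [csLabel_zero p1, csLabel_leaf p2]
    exact Or.inr (Or.inr (Or.inr ⟨by omega, by omega, Or.inl ⟨p1, by omega⟩⟩))
  · rw [csLabel_leaf p2, csLabel_zero p1]
    exact Or.inr (Or.inr (Or.inr ⟨by omega, by omega, Or.inr ⟨p1, by omega⟩⟩))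

theorem cycleStar_three_labeling (n : ℕ) (hn : 4 ≤ n) :
    ∃ φ : Fin n → ℕ, IsEdgeIrregularLabeling (cycleStar 3 n) (n - 1) φ := by
  refine ⟨csLabel n, ?_, ?_⟩
  · intro v
    have := v.isLt
    simp only [csLabel, Finset.mem_Icc]
    split_ifs <;> omega
  · intro e he f hf hw
    induction e using Sym2.ind with
    | _ a b =>
    induction f using Sym2.ind with
    | _ c d =>
    rw [SimpleGraph.mem_edgeSet] at he hf
    have hA := cs_weight_char hn he
    have hB := cs_weight_char hn hf
    simp only [edgeWeight, Sym2.lift_mk] at hw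
    rw [Sym2.eq_iff]
    simp only [Fin.ext_iff]
    rw [hw] at hA
    omega
end

section
/- For every integer n ≥ 5, the cycle-star graph CS_{4,n−4} admits an edge irregular (n−2)-labeling; that is, there exists a vertex labeling φ : V(CS_{4,n−4}) → {1,2,...,n−2} such that the weights w_φ(uv) = φ(u)+φ(v) of the n edges are pairwise distinct. -/
set_option maxHeartbeats 1600000 in
theorem cycleStar_four_labeling (n : ℕ) (hn : 5 ≤ n) :
    ∃ φ : Fin n → ℕ, IsEdgeIrregularLabeling (cycleStar 4 n) (n - 2) φ := by
  set φ : Fin n → ℕ := fun i =>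
    if i.val = 0 then n - 2 else if i.val ≤ 2 then 1
    else if i.val = 3 then 2 else i.val - 1 with hφ
  have hclass : ∀ e ∈ (cycleStar 4 n).edgeSet,
      e = s((⟨0, by omega⟩ : Fin n), (⟨1, by omega⟩ : Fin n)) ∨
      e = s((⟨1, by omega⟩ : Fin n), (⟨2, by omega⟩ : Fin n)) ∨
      e = s((⟨2, by omega⟩ : Fin n), (⟨3, by omega⟩ : Fin n)) ∨
      e = s((⟨0, by omega⟩ : Fin n), (⟨3, by omega⟩ : Fin n)) ∨
      ∃ j : Fin n, 4 ≤ j.val ∧ e = s((⟨0, by omega⟩ : Fin n), j) := by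
    intro e he
    induction e using Sym2.ind with
    | _ a b =>
      rw [SimpleGraph.mem_edgeSet, cycleStar, SimpleGraph.fromRel_adj] at he
      obtain ⟨hne, h⟩ := he
      have hne' : a.val ≠ b.val := fun h => hne (Fin.ext h)
      rcases h with (h | h) | (h | h)
      · have hc : (a.val = 0 ∧ b.val = 1) ∨ (a.val = 1 ∧ b.val = 2) ∨
            (a.val = 2 ∧ b.val = 3) ∨ (a.val = 3 ∧ b.val = 0) := by omega
        rcases hc with ⟨h1, h2⟩ | ⟨h1, h2⟩ | ⟨h1, h2⟩ | ⟨h1, h2⟩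
        · exact Or.inl (by rw [show a = ⟨0, by omega⟩ from Fin.ext h1,
            show b = ⟨1, by omega⟩ from Fin.ext h2])
        · exact Or.inr (Or.inl (by rw [show a = ⟨1, by omega⟩ from Fin.ext h1,
            show b = ⟨2, by omega⟩ from Fin.ext h2]))
        · exact Or.inr (Or.inr (Or.inl (by rw [show a = ⟨2, by omega⟩ from Fin.ext h1,
            show b = ⟨3, by omega⟩ from Fin.ext h2])))
        · refine Or.inr (Or.inr (Or.inr (Or.inl ?_)))
          rw [show a = ⟨3, by omega⟩ from Fin.ext h1,
            show b = ⟨0, by omega⟩ from Fin.ext h2]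
          exact Sym2.eq_swap
      · exact Or.inr (Or.inr (Or.inr (Or.inr ⟨b, h.2,
          by rw [show a = ⟨0, by omega⟩ from Fin.ext h.1]⟩)))
      · have hc : (b.val = 0 ∧ a.val = 1) ∨ (b.val = 1 ∧ a.val = 2) ∨
            (b.val = 2 ∧ a.val = 3) ∨ (b.val = 3 ∧ a.val = 0) := by omega
        rcases hc with ⟨h1, h2⟩ | ⟨h1, h2⟩ | ⟨h1, h2⟩ | ⟨h1, h2⟩
        · exact Or.inl (by rw [show a = ⟨1, by omega⟩ from Fin.ext h2,
            show b = ⟨0, by omega⟩ from Fin.ext h1]; exact Sym2.eq_swap)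
        · exact Or.inr (Or.inl (by rw [show a = ⟨2, by omega⟩ from Fin.ext h2,
            show b = ⟨1, by omega⟩ from Fin.ext h1]; exact Sym2.eq_swap))
        · exact Or.inr (Or.inr (Or.inl (by rw [show a = ⟨3, by omega⟩ from Fin.ext h2,
            show b = ⟨2, by omega⟩ from Fin.ext h1]; exact Sym2.eq_swap)))
        · exact Or.inr (Or.inr (Or.inr (Or.inl (by
            rw [show a = ⟨0, by omega⟩ from Fin.ext h2,
              show b = ⟨3, by omega⟩ from Fin.ext h1]))))
      · exact Or.inr (Or.inr (Or.inr (Or.inr ⟨a, h.2,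
          by rw [show b = ⟨0, by omega⟩ from Fin.ext h.1]; exact Sym2.eq_swap⟩)))
  refine ⟨φ, ?_, ?_⟩
  · intro v
    have := v.isLt
    simp only [Finset.mem_Icc, hφ]
    split_ifs <;> omega
  · intro e he f hf hw
    rcases hclass e he with rfl | rfl | rfl | rfl | ⟨j, hj, rfl⟩ <;>
      rcases hclass f hf with rfl | rfl | rfl | rfl | ⟨j', hj', rfl⟩ <;>
      simp only [edgeWeight, Sym2.lift_mk, hφ, Fin.val_mk] at hw
    all_goals try rfl
    all_goals try (exfalso; split_ifs at hw <;> first | omega | contradiction)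
    all_goals refine (show j = j' from Fin.ext ?_) ▸ rfl
    all_goals split_ifs at hw <;> first | omega | contradiction
end

section
/- For every integer n ≥ 9, the cycle-star graph CS_{6,n−6} admits an edge irregular (n−4)-labeling; that is, there exists a vertex labeling φ : V(CS_{6,n−6}) → {1,2,...,n−4} such that the weights w_φ(uv) = φ(u)+φ(v) of the n edges are pairwise distinct. -/
def ψ : ℕ → ℕ := fun x =>
  if x = 0 then 5 else if x = 1 then 1 else if x = 2 then 1 else if x = 3 then 2
  else if x = 4 then 2 else if x = 5 then 3 else if x = 6 then 2 else x - 3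

lemma ψ_leaf {y : ℕ} (h : 6 ≤ y) : ψ y = if y = 6 then 2 else y - 3 := by
  unfold ψ; split_ifs <;> omega

lemma ψ_zero : ψ 0 = 5 := rfl

lemma cycle_char {x y : ℕ} (hx : x < 6) (hy : y < 6)
    (hc : y = (x+1) % 6 ∨ x = (y+1) % 6) :
    (ψ x + ψ y = 6 ∧ (x = 0 ∧ y = 1 ∨ x = 1 ∧ y = 0)) ∨
    (ψ x + ψ y = 2 ∧ (x = 1 ∧ y = 2 ∨ x = 2 ∧ y = 1)) ∨
    (ψ x + ψ y = 3 ∧ (x = 2 ∧ y = 3 ∨ x = 3 ∧ y = 2)) ∨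
    (ψ x + ψ y = 4 ∧ (x = 3 ∧ y = 4 ∨ x = 4 ∧ y = 3)) ∨
    (ψ x + ψ y = 5 ∧ (x = 4 ∧ y = 5 ∨ x = 5 ∧ y = 4)) ∨
    (ψ x + ψ y = 8 ∧ (x = 5 ∧ y = 0 ∨ x = 0 ∧ y = 5)) := by
  revert hc; interval_cases x <;> interval_cases y <;> decide

lemma main (x y z w : ℕ)
    (hx : ((x < 6 ∧ y < 6 ∧ y = (x+1)%6) ∨ (x = 0 ∧ 6 ≤ y)) ∨
          ((y < 6 ∧ x < 6 ∧ x = (y+1)%6) ∨ (y = 0 ∧ 6 ≤ x)))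
    (hz : ((z < 6 ∧ w < 6 ∧ w = (z+1)%6) ∨ (z = 0 ∧ 6 ≤ w)) ∨
          ((w < 6 ∧ z < 6 ∧ z = (w+1)%6) ∨ (w = 0 ∧ 6 ≤ z)))
    (hxy : x ≠ y) (hzw : z ≠ w)
    (hsum : ψ x + ψ y = ψ z + ψ w) :
    (x = z ∧ y = w) ∨ (x = w ∧ y = z) := by
  have HX : (x < 6 ∧ y < 6 ∧ (y = (x+1)%6 ∨ x = (y+1)%6)) ∨ (x = 0 ∧ 6 ≤ y) ∨ (y = 0 ∧ 6 ≤ x) := by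
    omega
  have HZ : (z < 6 ∧ w < 6 ∧ (w = (z+1)%6 ∨ z = (w+1)%6)) ∨ (z = 0 ∧ 6 ≤ w) ∨ (w = 0 ∧ 6 ≤ z) := by
    omega
  clear hx hz
  rcases HX with ⟨hx1, hy1, hc⟩ | ⟨hx0, hy6⟩ | ⟨hy0, hx6⟩ <;>
  rcases HZ with ⟨hz1, hw1, hc'⟩ | ⟨hz0, hw6⟩ | ⟨hw0, hz6⟩
  · have h1 := cycle_char hx1 hy1 hc
    have h2 := cycle_char hz1 hw1 hc'
    omega
  · have h1 := cycle_char hx1 hy1 hc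
    rw [hz0, ψ_zero, ψ_leaf hw6] at hsum
    split_ifs at hsum <;> omega
  · have h1 := cycle_char hx1 hy1 hc
    rw [hw0, ψ_zero, ψ_leaf hz6] at hsum
    split_ifs at hsum <;> omega
  · have h2 := cycle_char hz1 hw1 hc'
    rw [hx0, ψ_zero, ψ_leaf hy6] at hsum
    split_ifs at hsum <;> omega
  · rw [hx0, hz0, ψ_zero, ψ_leaf hy6, ψ_leaf hw6] at hsum
    split_ifs at hsum <;> omega
  · rw [hx0, hw0, ψ_zero, ψ_leaf hy6, ψ_leaf hz6] at hsum
    split_ifs at hsum <;> omega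
  · have h2 := cycle_char hz1 hw1 hc'
    rw [hy0, ψ_zero, ψ_leaf hx6] at hsum
    split_ifs at hsum <;> omega
  · rw [hy0, hz0, ψ_zero, ψ_leaf hx6, ψ_leaf hw6] at hsum
    split_ifs at hsum <;> omega
  · rw [hy0, hw0, ψ_zero, ψ_leaf hx6, ψ_leaf hz6] at hsum
    split_ifs at hsum <;> omega

theorem cycleStar_six_labeling (n : ℕ) (hn : 9 ≤ n) :
    ∃ φ : Fin n → ℕ, IsEdgeIrregularLabeling (cycleStar 6 n) (n - 4) φ := by
  refine ⟨fun i => ψ i.val, ?_, ?_⟩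
  · intro v
    have := v.isLt
    simp only [Finset.mem_Icc, ψ]
    split_ifs <;> omega
  · intro e he f hf hw
    induction e using Sym2.ind with | _ a b =>
    induction f using Sym2.ind with | _ c d =>
    rw [SimpleGraph.mem_edgeSet, cycleStar, SimpleGraph.fromRel_adj] at he hf
    simp only [edgeWeight, Sym2.lift_mk] at hw
    obtain ⟨hab, h1⟩ := he
    obtain ⟨hcd, h2⟩ := hf
    have hab' : a.val ≠ b.val := fun h => hab (Fin.ext h)
    have hcd' : c.val ≠ d.val := fun h => hcd (Fin.ext h)
    have := main a.val b.val c.val d.val h1 h2 hab' hcd' hw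
    rw [Sym2.eq_iff]
    rcases this with ⟨h1, h2⟩ | ⟨h1, h2⟩
    · exact Or.inl ⟨Fin.ext h1, Fin.ext h2⟩
    · exact Or.inr ⟨Fin.ext h1, Fin.ext h2⟩
end
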